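/- arXiv:math/0203198 — 5 statements merged into one kernel-verified Lean document; each statement's English description precedes it below -/
import Mathlib

section
/- Let r : 𝔤* → 𝔤 be a skew-symmetric linear map such that the r-bracket [·,·]_r satisfies the Jacobi identity (so (𝔤*, [·,·]_r) is a Lie algebra), and assume that r([α,β]_r) - [r(α), r(β)] lies in the center of 𝔤 for all α, β ∈ 𝔤*. Then the bilinear product on 𝔤* defined by αβ := ad*_{r(α)}β is left symmetric (an LSA structure) and is compatible with the Lie bracket [·,·]_r, i.e. αβ - βα = [α,β]_r for all α, β ∈ 𝔤*. -/
/-- The coadjoint action of `x : L` on the dual: `⟨coad x α, y⟩ = -⟨α, [x,y]⟩`. -/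
noncomputable def coad {L : Type*} [LieRing L] [LieAlgebra ℝ L]
    (x : L) (α : Module.Dual ℝ L) : Module.Dual ℝ L :=
  -(α ∘ₗ (LieAlgebra.ad ℝ L x))

/-- The `r`-bracket `[α,β]_r = ad*_{r α} β - ad*_{r β} α` on the dual. -/
noncomputable def rb {L : Type*} [LieRing L] [LieAlgebra ℝ L]
    (r : Module.Dual ℝ L →ₗ[ℝ] L) (α β : Module.Dual ℝ L) : Module.Dual ℝ L :=
  coad (r α) β - coad (r β) α

section Coadjoint

variable {L : Type*} [LieRing L] [LieAlgebra ℝ L]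

@[simp]
theorem coad_apply (x : L) (α : Module.Dual ℝ L) (y : L) : coad x α y = -α ⁅x, y⁆ := rfl

theorem coad_sub_left (x y : L) (α : Module.Dual ℝ L) :
    coad (x - y) α = coad x α - coad y α := by
  ext z
  simp only [coad_apply, sub_lie, map_sub, LinearMap.sub_apply]
  ring

theorem coad_lie (x y : L) (α : Module.Dual ℝ L) :
    coad ⁅x, y⁆ α = coad x (coad y α) - coad y (coad x α) := by
  ext z
  simp only [coad_apply, LinearMap.sub_apply, lie_lie, map_sub, neg_neg]
  abel

theorem coad_eq_zero_of_forall_lie_eq_zero {z : L} (hz : ∀ y : L, ⁅z, y⁆ = 0)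
    (α : Module.Dual ℝ L) : coad z α = 0 := by
  ext y
  simp [hz y]

end Coadjoint

theorem stmt0_general {L : Type*} [LieRing L] [LieAlgebra ℝ L]
    (r : Module.Dual ℝ L →ₗ[ℝ] L)
    (hcenter : ∀ α β : Module.Dual ℝ L, ∀ y : L,
      ⁅r (rb r α β) - ⁅r α, r β⁆, y⁆ = 0) :
    (∀ α β γ : Module.Dual ℝ L,
      coad (r (coad (r α) β)) γ - coad (r α) (coad (r β) γ)
        = coad (r (coad (r β) α)) γ - coad (r β) (coad (r α) γ)) ∧
    (∀ α β : Module.Dual ℝ L,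
      coad (r α) β - coad (r β) α = rb r α β) := by
  refine ⟨fun α β γ => ?_, fun α β => rfl⟩
  -- The defect of left symmetry is the coadjoint action of the central element
  -- `r [α, β]_r - [r α, r β]`, since `coad` is a representation.
  have hcentral := coad_eq_zero_of_forall_lie_eq_zero (hcenter α β) γ
  rw [coad_sub_left, coad_lie, rb, map_sub, coad_sub_left, sub_eq_zero] at hcentral
  rw [sub_eq_sub_iff_sub_eq_sub, hcentral]

/-- if the `r`-bracket satisfies the Jacobi identity and
`r([α,β]_r) - [r α, r β]` is central, then `αβ := ad*_{r α} β` is a left symmetric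
product compatible with `[·,·]_r`. -/
theorem stmt0 {L : Type*} [LieRing L] [LieAlgebra ℝ L] [FiniteDimensional ℝ L]
    (r : Module.Dual ℝ L →ₗ[ℝ] L)
    (hskew : ∀ α β : Module.Dual ℝ L, α (r β) = - β (r α))
    (hjac : ∀ α β γ : Module.Dual ℝ L,
      rb r (rb r α β) γ + rb r (rb r β γ) α + rb r (rb r γ α) β = 0)
    (hcenter : ∀ α β : Module.Dual ℝ L, ∀ y : L,
      ⁅r (rb r α β) - ⁅r α, r β⁆, y⁆ = 0) :
    (∀ α β γ : Module.Dual ℝ L,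
      coad (r (coad (r α) β)) γ - coad (r α) (coad (r β) γ)
        = coad (r (coad (r β) α)) γ - coad (r β) (coad (r α) γ)) ∧
    (∀ α β : Module.Dual ℝ L,
      coad (r α) β - coad (r β) α = rb r α β) :=
  stmt0_general r hcenter
end

section
/- Let r : 𝔤* → 𝔤 be a skew-symmetric solution of the classical Yang–Baxter equation, and equip 𝔤* with the left symmetric product αβ := ad*_{r(α)}β. Then the kernel Ker(r) is an abelian two-sided ideal of this left symmetric algebra: for every α ∈ Ker(r) and β ∈ 𝔤* one has αβ = 0 and βα ∈ Ker(r); in particular Ker(r) is an ideal of the Lie algebra (𝔤*, [·,·]_r) on which the bracket vanishes. -/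
/-- `[r,r](α,β,γ) := ⟨γ,[r α, r β]⟩ + ⟨α,[r β, r γ]⟩ + ⟨β,[r γ, r α]⟩`. -/
def cybe {L : Type*} [LieRing L] [LieAlgebra ℝ L]
    (r : Module.Dual ℝ L →ₗ[ℝ] L) (α β γ : Module.Dual ℝ L) : ℝ :=
  γ ⁅r α, r β⁆ + α ⁅r β, r γ⁆ + β ⁅r γ, r α⁆

section

variable {L : Type*} [LieRing L] [LieAlgebra ℝ L]

@[simp]
theorem coad_zero_left (α : Module.Dual ℝ L) : coad (0 : L) α = 0 := by
  ext y
  simp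

theorem rb_eq_coad_of_mem_ker {r : Module.Dual ℝ L →ₗ[ℝ] L} {α : Module.Dual ℝ L}
    (hα : α ∈ LinearMap.ker r) (β : Module.Dual ℝ L) : rb r β α = coad (r β) α := by
  rw [rb, LinearMap.mem_ker.mp hα, coad_zero_left, sub_zero]

theorem cybe_of_mem_ker {r : Module.Dual ℝ L →ₗ[ℝ] L} {α : Module.Dual ℝ L}
    (hα : α ∈ LinearMap.ker r) (β γ : Module.Dual ℝ L) :
    cybe r α β γ = α ⁅r β, r γ⁆ := by
  simp [cybe, LinearMap.mem_ker.mp hα]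

/-- By skew-symmetry `γ (r (coad (r β) α)) = α ⁅r β, r γ⁆`, which is `[r,r](α,β,γ)` once
`r α = 0`. -/
theorem coad_mem_ker_of_mem_ker {r : Module.Dual ℝ L →ₗ[ℝ] L}
    (hskew : ∀ α β : Module.Dual ℝ L, α (r β) = - β (r α))
    (hcybe : ∀ α β γ : Module.Dual ℝ L, cybe r α β γ = 0)
    {α : Module.Dual ℝ L} (hα : α ∈ LinearMap.ker r) (β : Module.Dual ℝ L) :
    coad (r β) α ∈ LinearMap.ker r := by
  rw [LinearMap.mem_ker, ← Module.forall_dual_apply_eq_zero_iff ℝ]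
  intro γ
  rw [hskew, coad_apply, neg_neg, ← cybe_of_mem_ker hα, hcybe]

end

theorem stmt6_general {L : Type*} [LieRing L] [LieAlgebra ℝ L]
    (r : Module.Dual ℝ L →ₗ[ℝ] L)
    (hskew : ∀ α β : Module.Dual ℝ L, α (r β) = - β (r α))
    (hcybe : ∀ α β γ : Module.Dual ℝ L, cybe r α β γ = 0) :
    (∀ α ∈ LinearMap.ker r, ∀ β : Module.Dual ℝ L, coad (r α) β = 0) ∧
    (∀ α ∈ LinearMap.ker r, ∀ β : Module.Dual ℝ L, coad (r β) α ∈ LinearMap.ker r) ∧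
    (∀ α ∈ LinearMap.ker r, ∀ β : Module.Dual ℝ L, rb r β α ∈ LinearMap.ker r) ∧
    (∀ α ∈ LinearMap.ker r, ∀ α' ∈ LinearMap.ker r, rb r α α' = 0) := by
  have coad_ker_left : ∀ α ∈ LinearMap.ker r, ∀ β : Module.Dual ℝ L, coad (r α) β = 0 :=
    fun α hα β => by rw [LinearMap.mem_ker.mp hα, coad_zero_left]
  refine ⟨coad_ker_left, fun α hα => coad_mem_ker_of_mem_ker hskew hcybe hα, fun α hα β => ?_,
    fun α hα α' hα' => ?_⟩
  · rw [rb_eq_coad_of_mem_ker hα]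
    exact coad_mem_ker_of_mem_ker hskew hcybe hα β
  · rw [rb_eq_coad_of_mem_ker hα', coad_ker_left α hα]

/-- for a skew-symmetric solution `r` of the CYBE, `Ker r` is an abelian
two-sided ideal of the LSA `(𝔤*, αβ = ad*_{r α} β)`: for `α ∈ Ker r` and `β ∈ 𝔤*`,
`αβ = 0` and `βα ∈ Ker r`; in particular `Ker r` is an ideal of `(𝔤*, [·,·]_r)` on
which the bracket vanishes. -/
theorem stmt6 {L : Type*} [LieRing L] [LieAlgebra ℝ L] [FiniteDimensional ℝ L]
    (r : Module.Dual ℝ L →ₗ[ℝ] L)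
    (hskew : ∀ α β : Module.Dual ℝ L, α (r β) = - β (r α))
    (hcybe : ∀ α β γ : Module.Dual ℝ L, cybe r α β γ = 0) :
    (∀ α ∈ LinearMap.ker r, ∀ β : Module.Dual ℝ L, coad (r α) β = 0) ∧
    (∀ α ∈ LinearMap.ker r, ∀ β : Module.Dual ℝ L, coad (r β) α ∈ LinearMap.ker r) ∧
    (∀ α ∈ LinearMap.ker r, ∀ β : Module.Dual ℝ L, rb r β α ∈ LinearMap.ker r) ∧
    (∀ α ∈ LinearMap.ker r, ∀ α' ∈ LinearMap.ker r, rb r α α' = 0) :=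
  stmt6_general r hskew hcybe
end

section
/- Let A and B be left symmetric algebras with underlying Lie algebras A₋ and B₋ (brackets given by commutators), and let θ₁ : A₋ → gl(B) and θ₂ : B₋ → gl(A) be Lie algebra representations satisfying (θ₁(a)b)b' + b(θ₁(a)b') - θ₁(a)(bb') = θ₁(θ₂(b)a)b' and (θ₂(b)a)a' + a(θ₂(b)a') - θ₂(b)(aa') = θ₂(θ₁(a)b)a' for all a, a' ∈ A, b, b' ∈ B. Then the product (a,b)(a',b') := (aa' + θ₂(b)a', bb' + θ₁(a)b') on the vector space A × B is left symmetric, and its commutator Lie bracket is [(a,b),(a',b')] = ([a,a'] + θ₂(b)a' - θ₂(b')a, [b,b'] + θ₁(a)b' - θ₁(a')b). -/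
/-! Expanding both sides componentwise, the associator of the product on `A × B` is the associator
of `A` (resp. `B`) plus mixed terms. Those linear in `θ₂` (resp. `θ₁`) cancel against each other
by the two compatibility identities, and the quadratic ones `θ₂(b)θ₂(b')a''` (resp. `θ₁(a)θ₁(a')b''`)
become symmetric in the first two arguments because `θ₂` (resp. `θ₁`) is a representation. -/

/-- The product `(a,b)(a',b') = (aa' + θ₂(b)a', bb' + θ₁(a)b')` on `A × B`. -/
def lprod {A B : Type*} [AddCommGroup A] [Module ℝ A] [AddCommGroup B] [Module ℝ B]
    (mA : A →ₗ[ℝ] A →ₗ[ℝ] A) (mB : B →ₗ[ℝ] B →ₗ[ℝ] B)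
    (th1 : A →ₗ[ℝ] Module.End ℝ B) (th2 : B →ₗ[ℝ] Module.End ℝ A)
    (u v : A × B) : A × B :=
  (mA u.1 v.1 + th2 u.2 v.1, mB u.2 v.2 + th1 u.1 v.2)

section

variable {A B : Type*} [AddCommGroup A] [Module ℝ A] [AddCommGroup B] [Module ℝ B]
  (mA : A →ₗ[ℝ] A →ₗ[ℝ] A) (mB : B →ₗ[ℝ] B →ₗ[ℝ] B)
  (th1 : A →ₗ[ℝ] Module.End ℝ B) (th2 : B →ₗ[ℝ] Module.End ℝ A)

local infixl:70 " ⋆ " => lprod mA mB th1 th2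

theorem lprod_sub_lprod_swap (u v : A × B) :
    u ⋆ v - v ⋆ u
      = (mA u.1 v.1 - mA v.1 u.1 + th2 u.2 v.1 - th2 v.2 u.1,
         mB u.2 v.2 - mB v.2 u.2 + th1 u.1 v.2 - th1 v.1 u.2) := by
  simp only [lprod, Prod.mk_sub_mk, Prod.mk.injEq]
  constructor <;> abel

theorem fst_lprod_associator_swap
    (hA : ∀ a a' a'' : A,
      mA (mA a a') a'' - mA a (mA a' a'') = mA (mA a' a) a'' - mA a' (mA a a''))
    (hrep2 : ∀ b b' : B,
      th2 (mB b b' - mB b' b) = th2 b * th2 b' - th2 b' * th2 b)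
    (h13 : ∀ (b : B) (a a' : A),
      mA (th2 b a) a' + mA a (th2 b a') - th2 b (mA a a') = th2 (th1 a b) a')
    (u v w : A × B) :
    ((u ⋆ v) ⋆ w - u ⋆ (v ⋆ w)).1 = ((v ⋆ u) ⋆ w - v ⋆ (u ⋆ w)).1 := by
  obtain ⟨a, b⟩ := u
  obtain ⟨a', b'⟩ := v
  obtain ⟨a'', b''⟩ := w
  have hrep := LinearMap.congr_fun (hrep2 b b') a''
  simp only [LinearMap.sub_apply, Module.End.mul_apply, map_sub] at hrep
  simp only [lprod, Prod.fst_sub, map_add, LinearMap.add_apply]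
  linear_combination (norm := module) hA a a' a'' + h13 b a' a'' - h13 b' a a'' + hrep

theorem snd_lprod_associator_swap
    (hB : ∀ b b' b'' : B,
      mB (mB b b') b'' - mB b (mB b' b'') = mB (mB b' b) b'' - mB b' (mB b b''))
    (hrep1 : ∀ a a' : A,
      th1 (mA a a' - mA a' a) = th1 a * th1 a' - th1 a' * th1 a)
    (h12 : ∀ (a : A) (b b' : B),
      mB (th1 a b) b' + mB b (th1 a b') - th1 a (mB b b') = th1 (th2 b a) b')
    (u v w : A × B) :
    ((u ⋆ v) ⋆ w - u ⋆ (v ⋆ w)).2 = ((v ⋆ u) ⋆ w - v ⋆ (u ⋆ w)).2 := by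
  obtain ⟨a, b⟩ := u
  obtain ⟨a', b'⟩ := v
  obtain ⟨a'', b''⟩ := w
  have hrep := LinearMap.congr_fun (hrep1 a a') b''
  simp only [LinearMap.sub_apply, Module.End.mul_apply, map_sub] at hrep
  simp only [lprod, Prod.snd_sub, map_add, LinearMap.add_apply]
  linear_combination (norm := module) hB b b' b'' + h12 a b' b'' - h12 a' b b'' + hrep

end

theorem stmt10_general {A B : Type*}
    [AddCommGroup A] [Module ℝ A]
    [AddCommGroup B] [Module ℝ B]
    (mA : A →ₗ[ℝ] A →ₗ[ℝ] A) (mB : B →ₗ[ℝ] B →ₗ[ℝ] B)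
    (hA : ∀ a a' a'' : A,
      mA (mA a a') a'' - mA a (mA a' a'') = mA (mA a' a) a'' - mA a' (mA a a''))
    (hB : ∀ b b' b'' : B,
      mB (mB b b') b'' - mB b (mB b' b'') = mB (mB b' b) b'' - mB b' (mB b b''))
    (th1 : A →ₗ[ℝ] Module.End ℝ B) (th2 : B →ₗ[ℝ] Module.End ℝ A)
    (hrep1 : ∀ a a' : A,
      th1 (mA a a' - mA a' a) = th1 a * th1 a' - th1 a' * th1 a)
    (hrep2 : ∀ b b' : B,
      th2 (mB b b' - mB b' b) = th2 b * th2 b' - th2 b' * th2 b)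
    (h12 : ∀ (a : A) (b b' : B),
      mB (th1 a b) b' + mB b (th1 a b') - th1 a (mB b b') = th1 (th2 b a) b')
    (h13 : ∀ (b : B) (a a' : A),
      mA (th2 b a) a' + mA a (th2 b a') - th2 b (mA a a') = th2 (th1 a b) a') :
    (∀ u v w : A × B,
      lprod mA mB th1 th2 (lprod mA mB th1 th2 u v) w
          - lprod mA mB th1 th2 u (lprod mA mB th1 th2 v w)
        = lprod mA mB th1 th2 (lprod mA mB th1 th2 v u) w
          - lprod mA mB th1 th2 v (lprod mA mB th1 th2 u w)) ∧
    (∀ u v : A × B,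
      lprod mA mB th1 th2 u v - lprod mA mB th1 th2 v u
        = (mA u.1 v.1 - mA v.1 u.1 + th2 u.2 v.1 - th2 v.2 u.1,
           mB u.2 v.2 - mB v.2 u.2 + th1 u.1 v.2 - th1 v.1 u.2)) := by
  refine ⟨fun u v w => Prod.ext ?_ ?_, lprod_sub_lprod_swap mA mB th1 th2⟩
  · exact fst_lprod_associator_swap mA mB th1 th2 hA hrep2 h13 u v w
  · exact snd_lprod_associator_swap mA mB th1 th2 hB hrep1 h12 u v w

/-- if the LSAs `A`, `B` are `(θ₁,θ₂)`-linked, then the product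
`(a,b)(a',b') = (aa' + θ₂(b)a', bb' + θ₁(a)b')` on `A × B` is left symmetric, and its
commutator is the bracket
`([a,a'] + θ₂(b)a' - θ₂(b')a, [b,b'] + θ₁(a)b' - θ₁(a')b)`. -/
theorem stmt10 {A B : Type*}
    [AddCommGroup A] [Module ℝ A] [FiniteDimensional ℝ A]
    [AddCommGroup B] [Module ℝ B] [FiniteDimensional ℝ B]
    (mA : A →ₗ[ℝ] A →ₗ[ℝ] A) (mB : B →ₗ[ℝ] B →ₗ[ℝ] B)
    (hA : ∀ a a' a'' : A,
      mA (mA a a') a'' - mA a (mA a' a'') = mA (mA a' a) a'' - mA a' (mA a a''))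
    (hB : ∀ b b' b'' : B,
      mB (mB b b') b'' - mB b (mB b' b'') = mB (mB b' b) b'' - mB b' (mB b b''))
    (th1 : A →ₗ[ℝ] Module.End ℝ B) (th2 : B →ₗ[ℝ] Module.End ℝ A)
    (hrep1 : ∀ a a' : A,
      th1 (mA a a' - mA a' a) = th1 a * th1 a' - th1 a' * th1 a)
    (hrep2 : ∀ b b' : B,
      th2 (mB b b' - mB b' b) = th2 b * th2 b' - th2 b' * th2 b)
    (h12 : ∀ (a : A) (b b' : B),
      mB (th1 a b) b' + mB b (th1 a b') - th1 a (mB b b') = th1 (th2 b a) b')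
    (h13 : ∀ (b : B) (a a' : A),
      mA (th2 b a) a' + mA a (th2 b a') - th2 b (mA a a') = th2 (th1 a b) a') :
    (∀ u v w : A × B,
      lprod mA mB th1 th2 (lprod mA mB th1 th2 u v) w
          - lprod mA mB th1 th2 u (lprod mA mB th1 th2 v w)
        = lprod mA mB th1 th2 (lprod mA mB th1 th2 v u) w
          - lprod mA mB th1 th2 v (lprod mA mB th1 th2 u w)) ∧
    (∀ u v : A × B,
      lprod mA mB th1 th2 u v - lprod mA mB th1 th2 v u
        = (mA u.1 v.1 - mA v.1 u.1 + th2 u.2 v.1 - th2 v.2 u.1,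
           mB u.2 v.2 - mB v.2 u.2 + th1 u.1 v.2 - th1 v.1 u.2)) :=
  stmt10_general mA mB hA hB th1 th2 hrep1 hrep2 h12 h13
end

section
/- Let V be a left symmetric algebra and let A, B ⊆ V be left ideals (i.e. subspaces with V·A ⊆ A and V·B ⊆ B) such that V = A ⊕ B. Define θ₁(a)b := ab for a ∈ A, b ∈ B, and θ₂(b)a := ba. Then θ₁ is a Lie algebra representation of the underlying Lie algebra A₋ on B, θ₂ is a Lie algebra representation of B₋ on A, they satisfy (θ₁(a)b)b' + b(θ₁(a)b') - θ₁(a)(bb') = θ₁(θ₂(b)a)b' and (θ₂(b)a)a' + a(θ₂(b)a') - θ₂(b)(aa') = θ₂(θ₁(a)b)a' for all a, a' ∈ A, b, b' ∈ B, and the product (a,b)(a',b') := (aa' + θ₂(b)a', bb' + θ₁(a)b') on A × B coincides with the original product of V under the direct sum identification. -/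
/-! Every identity in the statement already holds for all `x y z : V`: the representation
property of the commutator and both linking conditions are rearrangements of left symmetry
of the associator, and the block form of the product is bilinearity together with the fact
that `A` and `B` are left ideals. -/

def LinearMap.IsLeftSymmetric {R V : Type*} [CommRing R] [AddCommGroup V] [Module R V]
    (mul : V →ₗ[R] V →ₗ[R] V) : Prop :=
  ∀ x y z : V, mul (mul x y) z - mul x (mul y z) = mul (mul y x) z - mul y (mul x z)

namespace LinearMap.IsLeftSymmetric

variable {R V : Type*} [CommRing R] [AddCommGroup V] [Module R V]
  {mul : V →ₗ[R] V →ₗ[R] V}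

theorem commutator_apply (h : mul.IsLeftSymmetric) (x y z : V) :
    mul (mul x y - mul y x) z = mul x (mul y z) - mul y (mul x z) := by
  simp only [map_sub, LinearMap.sub_apply]
  linear_combination (norm := module) h x y z

theorem linking (h : mul.IsLeftSymmetric) (x y z : V) :
    mul (mul x y) z + mul y (mul x z) - mul x (mul y z) = mul (mul y x) z := by
  linear_combination (norm := module) h x y z

end LinearMap.IsLeftSymmetric

theorem LinearMap.map_add_add₂ {R V : Type*} [CommRing R] [AddCommGroup V] [Module R V]
    (mul : V →ₗ[R] V →ₗ[R] V) (a a' b b' : V) :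
    mul (a + b) (a' + b') = (mul a a' + mul b a') + (mul b b' + mul a b') := by
  simp only [map_add, LinearMap.add_apply]
  abel

theorem stmt11_general {V : Type*} [AddCommGroup V] [Module ℝ V]
    (mul : V →ₗ[ℝ] V →ₗ[ℝ] V)
    (hlsa : ∀ x y z : V,
      mul (mul x y) z - mul x (mul y z) = mul (mul y x) z - mul y (mul x z))
    (A B : Submodule ℝ V)
    (hA : ∀ v : V, ∀ a ∈ A, mul v a ∈ A)
    (hB : ∀ v : V, ∀ b ∈ B, mul v b ∈ B) :
    -- θ₁ is a representation of A₋ on B (with values in B):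
    (∀ a ∈ A, ∀ b ∈ B, mul a b ∈ B) ∧
    (∀ a ∈ A, ∀ a' ∈ A, ∀ b ∈ B,
      mul (mul a a' - mul a' a) b = mul a (mul a' b) - mul a' (mul a b)) ∧
    -- θ₂ is a representation of B₋ on A (with values in A):
    (∀ b ∈ B, ∀ a ∈ A, mul b a ∈ A) ∧
    (∀ b ∈ B, ∀ b' ∈ B, ∀ a ∈ A,
      mul (mul b b' - mul b' b) a = mul b (mul b' a) - mul b' (mul b a)) ∧
    -- the linking condition (12):
    (∀ a ∈ A, ∀ b ∈ B, ∀ b' ∈ B,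
      mul (mul a b) b' + mul b (mul a b') - mul a (mul b b') = mul (mul b a) b') ∧
    -- the linking condition (13):
    (∀ b ∈ B, ∀ a ∈ A, ∀ a' ∈ A,
      mul (mul b a) a' + mul a (mul b a') - mul b (mul a a') = mul (mul a b) a') ∧
    -- the product on A × B coincides with the original product of V:
    (∀ a ∈ A, ∀ a' ∈ A, ∀ b ∈ B, ∀ b' ∈ B,
      mul (a + b) (a' + b') = (mul a a' + mul b a') + (mul b b' + mul a b') ∧
      mul a a' + mul b a' ∈ A ∧ mul b b' + mul a b' ∈ B) := by
  have hmul : mul.IsLeftSymmetric := hlsa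
  exact ⟨fun a _ b hb => hB a b hb,
    fun a _ a' _ b _ => hmul.commutator_apply a a' b,
    fun b _ a ha => hA b a ha,
    fun b _ b' _ a _ => hmul.commutator_apply b b' a,
    fun a _ b _ b' _ => hmul.linking a b b',
    fun b _ a _ a' _ => hmul.linking b a a',
    fun a ha a' ha' b hb b' hb' => ⟨mul.map_add_add₂ a a' b b',
      A.add_mem (hA a a' ha') (hA b a' ha'), B.add_mem (hB b b' hb') (hB a b' hb')⟩⟩

/-- if a left symmetric algebra `V` is the direct sum `V = A ⊕ B` of two
left ideals `A`, `B`, then `θ₁(a)b := ab` and `θ₂(b)a := ba` are Lie algebra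
representations of the underlying Lie algebras `A₋` on `B` and `B₋` on `A`, they
satisfy the linking conditions (12) and (13), and the product
`(a,b)(a',b') = (aa' + θ₂(b)a', bb' + θ₁(a)b')` coincides with the original product. -/
theorem stmt11 {V : Type*} [AddCommGroup V] [Module ℝ V] [FiniteDimensional ℝ V]
    (mul : V →ₗ[ℝ] V →ₗ[ℝ] V)
    (hlsa : ∀ x y z : V,
      mul (mul x y) z - mul x (mul y z) = mul (mul y x) z - mul y (mul x z))
    (A B : Submodule ℝ V) (hcompl : IsCompl A B)
    (hA : ∀ v : V, ∀ a ∈ A, mul v a ∈ A)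
    (hB : ∀ v : V, ∀ b ∈ B, mul v b ∈ B) :
    -- θ₁ is a representation of A₋ on B (with values in B):
    (∀ a ∈ A, ∀ b ∈ B, mul a b ∈ B) ∧
    (∀ a ∈ A, ∀ a' ∈ A, ∀ b ∈ B,
      mul (mul a a' - mul a' a) b = mul a (mul a' b) - mul a' (mul a b)) ∧
    -- θ₂ is a representation of B₋ on A (with values in A):
    (∀ b ∈ B, ∀ a ∈ A, mul b a ∈ A) ∧
    (∀ b ∈ B, ∀ b' ∈ B, ∀ a ∈ A,
      mul (mul b b' - mul b' b) a = mul b (mul b' a) - mul b' (mul b a)) ∧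
    -- the linking condition (12):
    (∀ a ∈ A, ∀ b ∈ B, ∀ b' ∈ B,
      mul (mul a b) b' + mul b (mul a b') - mul a (mul b b') = mul (mul b a) b') ∧
    -- the linking condition (13):
    (∀ b ∈ B, ∀ a ∈ A, ∀ a' ∈ A,
      mul (mul b a) a' + mul a (mul b a') - mul b (mul a a') = mul (mul a b) a') ∧
    -- the product on A × B coincides with the original product of V:
    (∀ a ∈ A, ∀ a' ∈ A, ∀ b ∈ B, ∀ b' ∈ B,
      mul (a + b) (a' + b') = (mul a a' + mul b a') + (mul b b' + mul a b') ∧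
      mul a a' + mul b a' ∈ A ∧ mul b b' + mul a b' ∈ B) :=
  stmt11_general mul hlsa A B hA hB
end

section
/- Let (𝔤, ω) be a symplectic Lie algebra with product xy on 𝔤 defined by ω(xy,z) = -ω(y,[x,z]). Then for every x ∈ 𝔤, the right multiplication R_x : y ↦ yx satisfies tr(R_x) = -2 tr(ad_x). In particular all right multiplications have zero trace if and only if 𝔤 is unimodular. -/
/-!
The defining identity of the product says that ω intertwines the left multiplication `L_x` with
`-(ad_x)ᵀ`, so `tr L_x = -tr ad_x`. Closedness and skew-symmetry of ω give `xy - yx = [x, y]`,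
i.e. `R_x = L_x - ad_x`, whence `tr R_x = -2 tr ad_x`.
-/

open Module

theorem LinearMap.trace_eq_of_comp_eq_dualMap_comp {K V : Type*} [Field K] [AddCommGroup V]
    [Module K V] [FiniteDimensional K V] {B : V →ₗ[K] Dual K V} (hB : Function.Injective B)
    {f g : V →ₗ[K] V} (h : B ∘ₗ f = g.dualMap ∘ₗ B) :
    LinearMap.trace K V f = LinearMap.trace K V g := by
  have hB' : Function.Bijective B :=
    ⟨hB, (LinearMap.injective_iff_surjective_of_finrank_eq_finrank
      (Subspace.dual_finrank_eq (K := K) (V := V)).symm).mp hB⟩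
  let e : V ≃ₗ[K] Dual K V := LinearEquiv.ofBijective B hB'
  have hf : f = e.symm.conj g.dualMap := by
    ext y
    apply hB
    simpa [LinearEquiv.conj_apply, e] using LinearMap.congr_fun h y
  rw [hf, LinearMap.trace_conj', LinearMap.dualMap_def, LinearMap.trace_transpose']

section SymplecticLieAlgebra

variable {K L : Type*} [Field K] [LieRing L] [LieAlgebra K L]
  {ω : L →ₗ[K] Dual K L} {p : L →ₗ[K] L →ₗ[K] L}

theorem trace_leftMul_eq_neg_trace_ad [FiniteDimensional K L]
    (hnondeg : ∀ x : L, ω x = 0 → x = 0) (hp : ∀ x y z : L, ω (p x y) z = -(ω y ⁅x, z⁆))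
    (x : L) : LinearMap.trace K L (p x) = -LinearMap.trace K L (LieAlgebra.ad K L x) := by
  rw [← map_neg]
  refine LinearMap.trace_eq_of_comp_eq_dualMap_comp
    (LinearMap.ker_eq_bot.mp (LinearMap.ker_eq_bot'.mpr hnondeg)) ?_
  ext y z
  simp only [LinearMap.comp_apply, LinearMap.dualMap_apply, hp, LinearMap.neg_apply,
    LieAlgebra.ad_apply]
  rw [map_neg]

theorem mul_sub_mul_swap_eq_lie (hskew : ∀ x y : L, ω x y = -ω y x)
    (hnondeg : ∀ x : L, ω x = 0 → x = 0)
    (hclosed : ∀ x y z : L, ω ⁅x, y⁆ z + ω ⁅y, z⁆ x + ω ⁅z, x⁆ y = 0)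
    (hp : ∀ x y z : L, ω (p x y) z = -(ω y ⁅x, z⁆)) (x y : L) :
    p x y - p y x = ⁅x, y⁆ := by
  rw [← sub_eq_zero]
  apply hnondeg
  ext z
  have hzx : ω ⁅z, x⁆ y = ω y ⁅x, z⁆ := by
    rw [← lie_skew, map_neg, LinearMap.neg_apply, hskew, neg_neg]
  simp only [map_sub, LinearMap.sub_apply, LinearMap.zero_apply, hp, hskew x ⁅y, z⁆]
  linear_combination hzx - hclosed x y z

end SymplecticLieAlgebra

/-- in a symplectic Lie algebra `(𝔤, ω)` with product defined by
`ω(xy,z) = -ω(y,[x,z])`, every right multiplication `R_x : y ↦ yx` satisfies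
`tr(R_x) = -2 tr(ad_x)`; in particular all right multiplications have zero trace iff
`𝔤` is unimodular. -/
theorem stmt16 {L : Type*} [LieRing L] [LieAlgebra ℝ L] [FiniteDimensional ℝ L]
    (ω : L →ₗ[ℝ] Module.Dual ℝ L)
    (hskew : ∀ x y : L, ω x y = - ω y x)
    (hnondeg : ∀ x : L, ω x = 0 → x = 0)
    (hclosed : ∀ x y z : L, ω ⁅x, y⁆ z + ω ⁅y, z⁆ x + ω ⁅z, x⁆ y = 0)
    (p : L →ₗ[ℝ] L →ₗ[ℝ] L)
    (hp : ∀ x y z : L, ω (p x y) z = -(ω y ⁅x, z⁆))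
    (Rf : L → (L →ₗ[ℝ] L))
    (hRf : ∀ x y : L, Rf x y = p y x) :
    (∀ x : L, LinearMap.trace ℝ L (Rf x) = -2 * LinearMap.trace ℝ L (LieAlgebra.ad ℝ L x)) ∧
    ((∀ x : L, LinearMap.trace ℝ L (Rf x) = 0) ↔
      (∀ x : L, LinearMap.trace ℝ L (LieAlgebra.ad ℝ L x) = 0)) := by
  have hR : ∀ x : L, Rf x = p x - LieAlgebra.ad ℝ L x := fun x => by
    ext y
    rw [hRf, LinearMap.sub_apply, LieAlgebra.ad_apply,
      ← mul_sub_mul_swap_eq_lie hskew hnondeg hclosed hp x y, sub_sub_cancel]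
  have htrace : ∀ x : L,
      LinearMap.trace ℝ L (Rf x) = -2 * LinearMap.trace ℝ L (LieAlgebra.ad ℝ L x) := fun x => by
    rw [hR, map_sub, trace_leftMul_eq_neg_trace_ad hnondeg hp]
    ring
  refine ⟨htrace, forall_congr' fun x => ?_⟩
  rw [htrace]
  simp
end
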